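/- arXiv:1806.04424 — 3 statements merged into one kernel-verified Lean document; each statement's English description precedes it below -/
import Mathlib

section
/- Let q, a, b, c be complex numbers with |q| < 1, |a| < 1, |b| < 1 and |c| ≤ 1. Then ∑_{n=1}^{∞} [∏_{k=0}^{n-1}(a − b q^k)] / ((1 − c q^n) (b;q)_n) = ∑_{m=0}^{∞} [∏_{k=0}^{m-1}(c − b q^k)] / (b;q)_m · ( a q^m/(1 − a q^m) − b q^m/(1 − b q^m) ). (Here ∏_{k=0}^{n-1}(a − b q^k) equals (b/a;q)_n a^n when a ≠ 0 and ∏_{k=0}^{m-1}(c − b q^k) equals (b/c;q)_m c^m when c ≠ 0.) -/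
/-!
Both sides are the iterated sums, in the two orders, of the double series
  `F(n, m) = (a, b; q)_{n+1} (c, b; q)_m q^{(n+1) m} / (b; q)_{n+m+2}`,
where `(u, v; q)_n = ∏_{k<n} (u - v q^k)`. Since `w_n = (u, v; q)_n / (v; q)_n` satisfies
`w_n - w_{n+1} = (1 - u) (u, v; q)_n / (v; q)_{n+1}` and `w_n → 0` for `|u|, |v| < 1`, we get
`∑_n (u, v; q)_n / (v; q)_{n+1} = 1 / (1 - u)`. After splitting `(b; q)_{n+m+2}`, this sums the
rows with `(u, v) = (c q^{n+1}, b q^{n+1})` and the columns with `(u, v) = (a q^m, b q^m)`.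
The double series converges absolutely: `(a, b; q)_n` decays geometrically as `|a| < 1`,
`(c, b; q)_m` is bounded as `|c| ≤ 1`, and `|(b; q)_j|` is bounded away from `0`.
-/

open Finset

/-- The finite q-Pochhammer symbol `(a;q)_n = ∏_{k=0}^{n-1} (1 - a q^k)`. -/
noncomputable def qPoch (a q : ℂ) (n : ℕ) : ℂ := ∏ k ∈ Finset.range n, (1 - a * q ^ k)

open Filter Topology

noncomputable def qPochHom (u v q : ℂ) (n : ℕ) : ℂ := ∏ k ∈ range n, (u - v * q ^ k)

lemma qPochHom_mul_mul (u v q x : ℂ) (n : ℕ) :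
    qPochHom (u * x) (v * x) q n = qPochHom u v q n * x ^ n := by
  rw [qPochHom, qPochHom]
  nth_rw 3 [← card_range n]
  rw [prod_mul_pow_card]
  exact prod_congr rfl fun k _ ↦ by ring

lemma qPoch_add (w q : ℂ) (m n : ℕ) :
    qPoch w q (m + n) = qPoch w q m * qPoch (w * q ^ m) q n := by
  simp only [qPoch, prod_range_add, pow_add, mul_assoc]

lemma sum_geometric_range_le {r : ℝ} (h0 : 0 ≤ r) (h1 : r < 1) (n : ℕ) :
    ∑ k ∈ range n, r ^ k ≤ (1 - r)⁻¹ := by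
  have := geom_sum_Ico_le_of_lt_one (m := 0) (n := n) h0 h1
  rwa [← range_eq_Ico, pow_zero, one_div] at this

lemma Real.exp_neg_div_le_one_sub {s t : ℝ} (ht : 0 ≤ t) (hts : t ≤ s) (hs : s < 1) :
    Real.exp (-(t / (1 - s))) ≤ 1 - t := by
  have ht1 : 0 < 1 - t := by linarith
  calc Real.exp (-(t / (1 - s))) ≤ Real.exp (1 - (1 - t)⁻¹) := by
        have hrewrite : 1 - (1 - t)⁻¹ = -(t / (1 - t)) := by field_simp; ring
        rw [hrewrite, Real.exp_le_exp, neg_le_neg_iff]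
        exact div_le_div_of_nonneg_left ht (by linarith) (by linarith)
    _ ≤ Real.exp (Real.log (1 - t)) := by gcongr; exact Real.one_sub_inv_le_log_of_pos ht1
    _ = 1 - t := Real.exp_log ht1

lemma exists_pos_forall_le_norm_qPoch {w q : ℂ} (hw : ‖w‖ < 1) (hq : ‖q‖ < 1) :
    ∃ δ > 0, ∀ n, δ ≤ ‖qPoch w q n‖ := by
  refine ⟨Real.exp (-(‖w‖ / (1 - ‖w‖) * (1 - ‖q‖)⁻¹)), Real.exp_pos _, fun n ↦ ?_⟩
  have hfactor (k : ℕ) : Real.exp (-(‖w‖ * ‖q‖ ^ k / (1 - ‖w‖))) ≤ ‖1 - w * q ^ k‖ := by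
    have hwq : ‖w * q ^ k‖ ≤ ‖w‖ * ‖q‖ ^ k := by rw [norm_mul, norm_pow]
    calc _ ≤ 1 - ‖w‖ * ‖q‖ ^ k :=
          Real.exp_neg_div_le_one_sub (by positivity)
            (mul_le_of_le_one_right (norm_nonneg w) (pow_le_one₀ (norm_nonneg q) hq.le)) hw
      _ ≤ 1 - ‖w * q ^ k‖ := by linarith
      _ ≤ ‖1 - w * q ^ k‖ := by simpa using norm_sub_norm_le (1 : ℂ) (w * q ^ k)
  calc _ ≤ Real.exp (-(‖w‖ / (1 - ‖w‖) * ∑ k ∈ range n, ‖q‖ ^ k)) := by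
        have : 0 ≤ ‖w‖ / (1 - ‖w‖) := div_nonneg (norm_nonneg w) (by linarith)
        gcongr
        exact sum_geometric_range_le (norm_nonneg q) hq n
    _ = ∏ k ∈ range n, Real.exp (-(‖w‖ * ‖q‖ ^ k / (1 - ‖w‖))) := by
        rw [← Real.exp_sum, mul_sum, ← sum_neg_distrib]
        exact congrArg Real.exp (sum_congr rfl fun k _ ↦ by ring)
    _ ≤ ‖qPoch w q n‖ := by
        rw [qPoch, norm_prod]
        exact prod_le_prod (fun k _ ↦ (Real.exp_pos _).le) fun k _ ↦ hfactor k

lemma qPoch_ne_zero {w q : ℂ} (hw : ‖w‖ < 1) (hq : ‖q‖ < 1) (n : ℕ) : qPoch w q n ≠ 0 := by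
  obtain ⟨δ, hδ, hle⟩ := exists_pos_forall_le_norm_qPoch hw hq
  exact norm_pos_iff.mp (hδ.trans_le (hle n))

lemma norm_qPochHom_le {u v q : ℂ} {ρ : ℝ} (hq : ‖q‖ < 1) (hρ : 0 < ρ) (hu : ‖u‖ ≤ ρ) (n : ℕ) :
    ‖qPochHom u v q n‖ ≤ Real.exp (‖v‖ / ρ * (1 - ‖q‖)⁻¹) * ρ ^ n := by
  have hfactor (k : ℕ) : ‖u - v * q ^ k‖ ≤ ρ * Real.exp (‖v‖ / ρ * ‖q‖ ^ k) :=
    calc ‖u - v * q ^ k‖ ≤ ‖u‖ + ‖v‖ * ‖q‖ ^ k := by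
          simpa [norm_mul, norm_pow] using norm_sub_le u (v * q ^ k)
      _ ≤ ρ * (‖v‖ / ρ * ‖q‖ ^ k + 1) := by
          rw [mul_add, ← mul_assoc, mul_div_cancel₀ _ hρ.ne']; linarith
      _ ≤ ρ * Real.exp (‖v‖ / ρ * ‖q‖ ^ k) := by gcongr; exact Real.add_one_le_exp _
  calc ‖qPochHom u v q n‖ ≤ ∏ k ∈ range n, (ρ * Real.exp (‖v‖ / ρ * ‖q‖ ^ k)) := by
        rw [qPochHom, norm_prod]
        exact prod_le_prod (fun k _ ↦ norm_nonneg _) fun k _ ↦ hfactor k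
    _ = Real.exp (‖v‖ / ρ * ∑ k ∈ range n, ‖q‖ ^ k) * ρ ^ n := by
        rw [prod_mul_distrib, prod_const, card_range, ← Real.exp_sum, mul_sum, mul_comm]
    _ ≤ Real.exp (‖v‖ / ρ * (1 - ‖q‖)⁻¹) * ρ ^ n := by
        gcongr
        exact sum_geometric_range_le (norm_nonneg q) hq n

lemma one_sub_ne_zero_of_norm_lt_one {u : ℂ} (hu : ‖u‖ < 1) : 1 - u ≠ 0 :=
  sub_ne_zero.mpr fun h ↦ by simp [← h] at hu

lemma norm_mul_pow_le (w : ℂ) {q : ℂ} (hq : ‖q‖ ≤ 1) (k : ℕ) : ‖w * q ^ k‖ ≤ ‖w‖ := by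
  rw [norm_mul, norm_pow]
  exact mul_le_of_le_one_right (norm_nonneg w) (pow_le_one₀ (norm_nonneg q) hq)

lemma hasSum_of_eq_sub_succ {G : Type*} [AddCommGroup G] [TopologicalSpace G]
    [IsTopologicalAddGroup G] [T2Space G] {f w : ℕ → G} (hf : Summable f)
    (hfw : ∀ n, f n = w n - w (n + 1)) (hw : Tendsto w atTop (𝓝 0)) : HasSum f (w 0) := by
  have hpartial : Tendsto (fun n ↦ ∑ i ∈ range n, f i) atTop (𝓝 (w 0 - 0)) := by
    simp_rw [hfw, sum_range_sub']
    exact tendsto_const_nhds.sub hw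
  rw [sub_zero] at hpartial
  exact tendsto_nhds_unique hf.hasSum.tendsto_sum_nat hpartial ▸ hf.hasSum

lemma hasSum_qPochHom_div_qPoch_succ {u v q : ℂ} (hq : ‖q‖ < 1) (hu : ‖u‖ < 1) (hv : ‖v‖ < 1) :
    HasSum (fun n ↦ qPochHom u v q n / qPoch v q (n + 1)) (1 - u)⁻¹ := by
  obtain ⟨ρ, huρ, hρ1⟩ := exists_between hu
  have hρ : 0 < ρ := (norm_nonneg u).trans_lt huρ
  obtain ⟨δ, hδ, hpoch⟩ := exists_pos_forall_le_norm_qPoch hv hq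
  set K := Real.exp (‖v‖ / ρ * (1 - ‖q‖)⁻¹)
  have hbound (n j : ℕ) : ‖qPochHom u v q n / qPoch v q j‖ ≤ K / δ * ρ ^ n := by
    rw [norm_div, div_le_iff₀ (hδ.trans_le (hpoch j))]
    calc ‖qPochHom u v q n‖ ≤ K * ρ ^ n := norm_qPochHom_le hq hρ huρ.le n
      _ = K / δ * ρ ^ n * δ := by field_simp
      _ ≤ K / δ * ρ ^ n * ‖qPoch v q j‖ := by gcongr; exact hpoch j
  have hgeom : Summable fun n ↦ ‖1 - u‖ * (K / δ * ρ ^ n) :=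
    ((summable_geometric_of_lt_one hρ.le hρ1).mul_left _).mul_left _
  have hsum : Summable fun n ↦ (1 - u) * (qPochHom u v q n / qPoch v q (n + 1)) :=
    .of_norm_bounded hgeom fun n ↦ by rw [norm_mul]; gcongr; exact hbound n (n + 1)
  have htail : Tendsto (fun n ↦ qPochHom u v q n / qPoch v q n) atTop (𝓝 0) := by
    refine squeeze_zero_norm (fun n ↦ hbound n n) ?_
    simpa using (tendsto_pow_atTop_nhds_zero_of_lt_one hρ.le hρ1).const_mul (K / δ)
  have htelescope (n : ℕ) : (1 - u) * (qPochHom u v q n / qPoch v q (n + 1)) =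
      qPochHom u v q n / qPoch v q n - qPochHom u v q (n + 1) / qPoch v q (n + 1) := by
    have hR := qPoch_ne_zero hv hq n
    have hfactor := one_sub_ne_zero_of_norm_lt_one ((norm_mul_pow_le v hq.le n).trans_lt hv)
    simp only [qPochHom, qPoch, prod_range_succ] at hR ⊢
    field_simp
    ring
  rw [← hasSum_mul_left_iff (one_sub_ne_zero_of_norm_lt_one hu), mul_inv_cancel₀
    (one_sub_ne_zero_of_norm_lt_one hu)]
  simpa [qPochHom, qPoch] using hasSum_of_eq_sub_succ hsum htelescope htail

lemma hasSum_qPochHom_succ_div_qPoch {u v q : ℂ} (hq : ‖q‖ < 1) (hu : ‖u‖ < 1) (hv : ‖v‖ < 1) :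
    HasSum (fun n ↦ qPochHom u v q (n + 1) / qPoch v q (n + 2)) (u / (1 - u) - v / (1 - v)) := by
  have := (hasSum_nat_add_iff' 1).mpr (hasSum_qPochHom_div_qPoch_succ hq hu hv)
  have hu' := one_sub_ne_zero_of_norm_lt_one hu
  have hv' := one_sub_ne_zero_of_norm_lt_one hv
  have hval : (1 - u)⁻¹ - ∑ i ∈ range 1, qPochHom u v q i / qPoch v q (i + 1) =
      u / (1 - u) - v / (1 - v) := by
    simp only [qPochHom, qPoch, sum_range_one, prod_range_zero, zero_add, prod_range_one,
      pow_zero, mul_one]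
    field_simp
    ring
  rwa [hval] at this

noncomputable def ramanujanDoubleTerm (q a b c : ℂ) (n m : ℕ) : ℂ :=
  qPochHom a b q (n + 1) * qPochHom c b q m * q ^ ((n + 1) * m) / qPoch b q (n + m + 2)

lemma hasSum_ramanujanDoubleTerm_row {q a b c : ℂ} (hq : ‖q‖ < 1) (hb : ‖b‖ < 1) (hc : ‖c‖ ≤ 1)
    (n : ℕ) :
    HasSum (fun m ↦ ramanujanDoubleTerm q a b c n m)
      (qPochHom a b q (n + 1) / ((1 - c * q ^ (n + 1)) * qPoch b q (n + 1))) := by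
  have hx : ‖q ^ (n + 1)‖ < 1 := by
    rw [norm_pow]; exact pow_lt_one₀ (norm_nonneg q) hq n.succ_ne_zero
  have hcx : ‖c * q ^ (n + 1)‖ < 1 := by
    rw [norm_mul]; exact (mul_le_of_le_one_left (norm_nonneg _) hc).trans_lt hx
  have hbx : ‖b * q ^ (n + 1)‖ < 1 := by
    rw [norm_mul]; exact (mul_le_of_le_one_left (norm_nonneg _) hb.le).trans_lt hx
  have := (hasSum_qPochHom_div_qPoch_succ hq hcx hbx).mul_left
    (qPochHom a b q (n + 1) / qPoch b q (n + 1))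
  have hterm (m : ℕ) : qPochHom a b q (n + 1) / qPoch b q (n + 1) *
      (qPochHom (c * q ^ (n + 1)) (b * q ^ (n + 1)) q m / qPoch (b * q ^ (n + 1)) q (m + 1)) =
      ramanujanDoubleTerm q a b c n m := by
    rw [ramanujanDoubleTerm, qPochHom_mul_mul, ← pow_mul, show n + m + 2 = n + 1 + (m + 1) by ring,
      qPoch_add b q (n + 1) (m + 1)]
    ring
  rwa [funext hterm, div_mul_eq_mul_div, ← div_eq_mul_inv, div_div] at this

lemma hasSum_ramanujanDoubleTerm_col {q a b c : ℂ} (hq : ‖q‖ < 1) (ha : ‖a‖ < 1) (hb : ‖b‖ < 1)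
    (m : ℕ) :
    HasSum (fun n ↦ ramanujanDoubleTerm q a b c n m)
      (qPochHom c b q m / qPoch b q m *
        (a * q ^ m / (1 - a * q ^ m) - b * q ^ m / (1 - b * q ^ m))) := by
  have hax := (norm_mul_pow_le a hq.le m).trans_lt ha
  have hbx := (norm_mul_pow_le b hq.le m).trans_lt hb
  have := (hasSum_qPochHom_succ_div_qPoch hq hax hbx).mul_left (qPochHom c b q m / qPoch b q m)
  have hterm (n : ℕ) : qPochHom c b q m / qPoch b q m *
      (qPochHom (a * q ^ m) (b * q ^ m) q (n + 1) / qPoch (b * q ^ m) q (n + 2)) =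
      ramanujanDoubleTerm q a b c n m := by
    rw [ramanujanDoubleTerm, qPochHom_mul_mul, ← pow_mul, show n + m + 2 = m + (n + 2) by ring,
      qPoch_add b q m (n + 2)]
    ring
  rwa [funext hterm] at this

lemma summable_ramanujanDoubleTerm {q a b c : ℂ} (hq : ‖q‖ < 1) (ha : ‖a‖ < 1) (hb : ‖b‖ < 1)
    (hc : ‖c‖ ≤ 1) : Summable (Function.uncurry (ramanujanDoubleTerm q a b c)) := by
  obtain ⟨ρ, haρ, hρ1⟩ := exists_between ha
  have hρ : 0 < ρ := (norm_nonneg a).trans_lt haρ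
  obtain ⟨δ, hδ, hpoch⟩ := exists_pos_forall_le_norm_qPoch hb hq
  set Ka := Real.exp (‖b‖ / ρ * (1 - ‖q‖)⁻¹)
  set Kc := Real.exp (‖b‖ * (1 - ‖q‖)⁻¹)
  have hgeom : Summable fun p : ℕ × ℕ ↦ Ka * Kc / δ * (ρ ^ p.1 * ‖q‖ ^ p.2) :=
    ((summable_geometric_of_lt_one hρ.le hρ1).mul_of_nonneg
      (summable_geometric_of_lt_one (norm_nonneg q) hq) (fun n ↦ by positivity)
      (fun m ↦ by positivity)).mul_left _
  refine .of_norm_bounded hgeom fun ⟨n, m⟩ ↦ ?_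
  have hP : ‖qPochHom a b q (n + 1)‖ ≤ Ka * ρ ^ n :=
    (norm_qPochHom_le hq hρ haρ.le (n + 1)).trans <| mul_le_mul_of_nonneg_left
      (pow_le_pow_of_le_one hρ.le hρ1.le n.le_succ) (Real.exp_pos _).le
  have hQ : ‖qPochHom c b q m‖ ≤ Kc := by
    simpa only [div_one, one_pow, mul_one] using norm_qPochHom_le hq one_pos hc m
  have hqpow : ‖q‖ ^ ((n + 1) * m) ≤ ‖q‖ ^ m :=
    pow_le_pow_of_le_one (norm_nonneg q) hq.le (Nat.le_mul_of_pos_left m n.succ_pos)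
  simp only [Function.uncurry_apply_pair, ramanujanDoubleTerm, norm_div, norm_mul, norm_pow]
  rw [div_le_iff₀ (hδ.trans_le (hpoch _))]
  calc ‖qPochHom a b q (n + 1)‖ * ‖qPochHom c b q m‖ * ‖q‖ ^ ((n + 1) * m)
      ≤ Ka * ρ ^ n * Kc * ‖q‖ ^ m := by gcongr
    _ = Ka * Kc / δ * (ρ ^ n * ‖q‖ ^ m) * δ := by field_simp
    _ ≤ Ka * Kc / δ * (ρ ^ n * ‖q‖ ^ m) * ‖qPoch b q (n + m + 2)‖ := by gcongr; exact hpoch _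

/-- Generalization of Ramanujan's identity (Theorem 2.1, first part):
for |q| < 1, |a| < 1, |b| < 1, |c| ≤ 1,
∑_{n≥1} ∏_{k=0}^{n-1}(a − b q^k) / ((1 − c q^n)(b;q)_n)
  = ∑_{m≥0} ∏_{k=0}^{m-1}(c − b q^k) / (b;q)_m · (a q^m/(1−a q^m) − b q^m/(1−b q^m)). -/
theorem stmt0 (q a b c : ℂ) (hq : ‖q‖ < 1) (ha : ‖a‖ < 1)
    (hb : ‖b‖ < 1) (hc : ‖c‖ ≤ 1) :
    ∑' n : ℕ, (∏ k ∈ Finset.range (n + 1), (a - b * q ^ k)) /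
        ((1 - c * q ^ (n + 1)) * qPoch b q (n + 1)) =
      ∑' m : ℕ, (∏ k ∈ Finset.range m, (c - b * q ^ k)) / qPoch b q m *
        (a * q ^ m / (1 - a * q ^ m) - b * q ^ m / (1 - b * q ^ m)) :=
  calc _ = ∑' n, ∑' m, ramanujanDoubleTerm q a b c n m :=
        tsum_congr fun n ↦ (hasSum_ramanujanDoubleTerm_row hq hb hc n).tsum_eq.symm
    _ = ∑' m, ∑' n, ramanujanDoubleTerm q a b c n m :=
        (summable_ramanujanDoubleTerm hq ha hb hc).tsum_comm.symm
    _ = _ := tsum_congr fun m ↦ (hasSum_ramanujanDoubleTerm_col hq ha hb m).tsum_eq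
end

section
/- For every positive integer n, the following identity holds in the polynomial ring ℤ[c]: ∑_{π ∈ D(n)} (−1)^{#(π)−1} ( ∑_{j=0}^{s(π)−1} c^j ) = ∑_{π ∈ P(n)} c^{l(π)−ν_d(π)} (c−1)^{ν_d(π)−1}. (Equivalently, for complex c ∉ {0,1}: ∑_{π ∈ D(n)} (−1)^{#(π)−1} (c^{s(π)} − 1)/(c − 1) = ∑_{π ∈ P(n)} c^{l(π)−1} (1 − 1/c)^{ν_d(π)−1}.) -/
/-!
Both sides are `q ^ n`-coefficients of polynomials in `q` over `ℤ[c]`; in `R[X]` below, `X` is `q`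
and `c` enters as the constant `C c`.

A distinct partition is a finite set `F` of positive parts, so the left side is the `q ^ n`
coefficient of `L_N = ∑_{F ⊆ [1, N]} (-1) ^ (#F - 1) (1 + c + ⋯ + c ^ (min F - 1)) q ^ (∑ F)`.
On the right, with `V` the set of part values,
`c ^ (l - ν) (c - 1) ^ (ν - 1) = ∑_{S ⊆ V \ {l}} (-1) ^ #S c ^ (l - 1 - #S)`, and the partitions
with largest part `a` whose parts include `S ∪ {a}` correspond to partitions of `n - a - ∑ S` into
parts `≤ a`, which a coefficient of the Gaussian binomial `[n, a]_q` counts. So the right side is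
the `q ^ n` coefficient of `R_N = ∑_{a=1}^{N} q ^ a [N, a]_q (c - q) ⋯ (c - q ^ (a - 1))` at
`N = n`. Finally `L_N = R_N`, as both satisfy
`F_{N+1} = (1 - q ^ (N + 1)) F_N + q ^ (N + 1) (1 + c + ⋯ + c ^ N)`; for `R_N` this follows from
the two q-Pascal rules and
`∑_{a=1}^{N} [N, a]_q (c - q) ⋯ (c - q ^ (a - 1)) = 1 + c + ⋯ + c ^ (N - 1)`.
-/

open Finset Polynomial

/-- The smallest part of a partition. -/
noncomputable def sPart {n : ℕ} (π : n.Partition) : ℕ := sInf {i | i ∈ π.parts}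

/-- The largest part of a partition. -/
def lPart {n : ℕ} (π : n.Partition) : ℕ := π.parts.sup

/-- The number of distinct part values of a partition. -/
def nud {n : ℕ} (π : n.Partition) : ℕ := π.parts.toFinset.card

namespace Nat.Partition

theorem sum_le_of_le_parts {n : ℕ} {π : n.Partition} {t : Multiset ℕ} (h : t ≤ π.parts) :
    t.sum ≤ n := by
  obtain ⟨u, hu⟩ := Multiset.le_iff_exists_add.1 h
  simp [← π.parts_sum, hu]

theorem card_filter_le_parts {p : ℕ → Prop} [DecidablePred p] {t : Multiset ℕ}
    (ht : ∀ i ∈ t, 0 < i ∧ p i) (n : ℕ) :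
    #{π ∈ restricted n p | t ≤ π.parts} =
      if t.sum ≤ n then #(restricted (n - t.sum) p) else 0 := by
  split_ifs with hn
  · refine card_bij' (fun π hπ => ⟨π.parts - t, ?_, ?_⟩)
      (fun μ _ => ⟨t + μ.parts, ?_, ?_⟩) ?_ ?_ ?_ ?_
    · exact fun hi => π.parts_pos (Multiset.mem_of_le (Multiset.sub_le_self _ _) hi)
    · have := congrArg Multiset.sum (tsub_add_cancel_of_le (mem_filter.1 hπ).2)
      rw [Multiset.sum_add, π.parts_sum] at this
      omega
    · intro i hi
      rcases Multiset.mem_add.1 hi with hi | hi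
      exacts [(ht i hi).1, μ.parts_pos hi]
    · rw [Multiset.sum_add, μ.parts_sum]
      omega
    · intro π hπ
      simp only [restricted, mem_filter, mem_univ, true_and] at hπ ⊢
      exact fun i hi => hπ.1 i (Multiset.mem_of_le (Multiset.sub_le_self _ _) hi)
    · intro μ hμ
      simp only [restricted, mem_filter, mem_univ, true_and] at hμ ⊢
      refine ⟨fun i hi => ?_, Multiset.le_add_right _ _⟩
      rcases Multiset.mem_add.1 hi with hi | hi
      exacts [(ht i hi).2, hμ i hi]
    · intro π hπ
      exact Nat.Partition.ext (add_tsub_cancel_of_le (mem_filter.1 hπ).2)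
    · intro μ _
      exact Nat.Partition.ext (add_tsub_cancel_left _ _)
  · exact Finset.card_eq_zero.2 (filter_eq_empty_iff.2 fun π _ h => hn (sum_le_of_le_parts h))

theorem card_restricted_le_zero (m : ℕ) :
    #(restricted m (· ≤ 0)) = if m = 0 then 1 else 0 := by
  split_ifs with hm
  · subst hm
    exact card_eq_one.2 ⟨default, eq_singleton_iff_unique_mem.2
      ⟨by simp [restricted], fun π _ => Subsingleton.elim _ _⟩⟩
  · refine Finset.card_eq_zero.2 (filter_eq_empty_iff.2 fun π _ h => ?_)
    obtain ⟨i, hi⟩ := Multiset.exists_mem_of_ne_zero fun h0 : π.parts = 0 =>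
      hm (by simpa [h0] using π.parts_sum.symm)
    exact (π.parts_pos hi).ne' (Nat.le_zero.1 (h i hi))

theorem card_restricted_le_succ (m a : ℕ) :
    #(restricted m (· ≤ a + 1)) = #(restricted m (· ≤ a)) +
      if a + 1 ≤ m then #(restricted (m - (a + 1)) (· ≤ a + 1)) else 0 := by
  have not_containing :
      {π ∈ restricted m (· ≤ a + 1) | ¬ {a + 1} ≤ π.parts} = restricted m (· ≤ a) := by
    ext π
    simp only [restricted, mem_filter, mem_univ, true_and, Multiset.singleton_le]
    exact ⟨fun h i hi => Nat.le_of_lt_succ ((h.1 i hi).lt_of_ne fun e => h.2 (e ▸ hi)),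
      fun h => ⟨fun i hi => (h i hi).trans a.le_succ, fun hi => by simpa using h _ hi⟩⟩
  have containing := card_filter_le_parts (p := (· ≤ a + 1)) (t := {a + 1}) (by simp) m
  rw [Multiset.sum_singleton] at containing
  rw [← card_filter_add_card_filter_not (fun π => {a + 1} ≤ π.parts), containing,
    not_containing, add_comm]

theorem sum_distincts_eq_sum_powerset {M : Type*} [AddCommMonoid M] (n : ℕ)
    (g : Finset ℕ → M) :
    ∑ π ∈ distincts n, g π.parts.toFinset =
      ∑ F ∈ (Icc 1 n).powerset with ∑ i ∈ F, i = n, g F := by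
  have hval : ∀ π ∈ distincts n, π.parts.toFinset.val = π.parts := fun π hπ => by
    rw [Multiset.toFinset_val, (mem_filter.1 hπ).2.dedup]
  refine sum_bij' (fun π _ => π.parts.toFinset)
    (fun F hF => ⟨F.val, fun hi => (mem_Icc.1 (mem_powerset.1 (mem_filter.1 hF).1 hi)).1,
      (sum_val F).trans (mem_filter.1 hF).2⟩) ?_ ?_ ?_ ?_ fun _ _ => rfl
  · intro π hπ
    refine mem_filter.2 ⟨mem_powerset.2 fun i hi => ?_, ?_⟩
    · rw [Multiset.mem_toFinset] at hi
      exact mem_Icc.2 ⟨π.parts_pos hi, le_of_mem_parts hi⟩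
    · have h := sum_val π.parts.toFinset
      rw [hval π hπ, π.parts_sum] at h
      exact h.symm
  · exact fun F _ => mem_filter.2 ⟨mem_univ _, F.nodup⟩
  · exact fun π hπ => Nat.Partition.ext (hval π hπ)
  · exact fun F _ => val_toFinset F

end Nat.Partition

open Nat.Partition

section GaussianBinomial

noncomputable def qBinom (R : Type*) [CommRing R] : ℕ → ℕ → R[X]
  | _, 0 => 1
  | 0, _ + 1 => 0
  | N + 1, a + 1 => qBinom R N a + X ^ (a + 1) * qBinom R N (a + 1)

variable {R : Type*} [CommRing R]

@[simp]
theorem qBinom_zero_right (N : ℕ) : qBinom R N 0 = 1 := by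
  cases N <;> rfl

theorem qBinom_succ_succ (N a : ℕ) :
    qBinom R (N + 1) (a + 1) = qBinom R N a + X ^ (a + 1) * qBinom R N (a + 1) := rfl

theorem qBinom_eq_zero_of_lt : ∀ {N a : ℕ}, N < a → qBinom R N a = 0
  | 0, _ + 1, _ => rfl
  | N + 1, a + 1, h => by
    rw [qBinom_succ_succ, qBinom_eq_zero_of_lt (by omega : N < a),
      qBinom_eq_zero_of_lt (by omega : N < a + 1), mul_zero, add_zero]

theorem qBinom_succ_succ' : ∀ {N a : ℕ}, a ≤ N →
    qBinom R (N + 1) (a + 1) = X ^ (N - a) * qBinom R N a + qBinom R N (a + 1)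
  | 0, 0, _ => by simp [qBinom_succ_succ, qBinom_eq_zero_of_lt]
  | N + 1, 0, _ => by
    have ih := qBinom_succ_succ' (Nat.zero_le N)
    have h₁ := qBinom_succ_succ (R := R) (N + 1) 0
    have h₂ := qBinom_succ_succ (R := R) N 0
    simp only [qBinom_zero_right, Nat.sub_zero, zero_add] at ih h₁ h₂ ⊢
    linear_combination h₁ + X * ih - h₂
  | N + 1, b + 1, h => by
    obtain hb | rfl := (Nat.le_of_succ_le_succ h).lt_or_eq
    · obtain ⟨k, rfl⟩ : ∃ k, N = b + 1 + k := ⟨N - (b + 1), by omega⟩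
      have ih₁ := qBinom_succ_succ' (N := b + 1 + k) (a := b) (by omega)
      have ih₂ := qBinom_succ_succ' (N := b + 1 + k) (a := b + 1) (by omega)
      have h₁ := qBinom_succ_succ (R := R) (b + 1 + k + 1) (b + 1)
      have h₂ := qBinom_succ_succ (R := R) (b + 1 + k) b
      have h₃ := qBinom_succ_succ (R := R) (b + 1 + k) (b + 1)
      rw [show b + 1 + k - b = k + 1 by omega] at ih₁
      rw [show b + 1 + k - (b + 1) = k by omega] at ih₂
      rw [show b + 1 + k + 1 - (b + 1) = k + 1 by omega]
      linear_combination h₁ + ih₁ - X ^ (k + 1) * h₂ - h₃ + X ^ (b + 2) * ih₂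
    · rw [qBinom_succ_succ, Nat.sub_self, pow_zero, one_mul,
        qBinom_eq_zero_of_lt (by omega : b + 1 < b + 2), mul_zero, add_zero]

/- A partition of `m ≤ N - a` has at most `N - a` parts, so of the box `a × (N - a)` only the
bound `a` on the parts matters. -/
theorem coeff_qBinom : ∀ {N a m : ℕ}, m + a ≤ N →
    (qBinom R N a).coeff m = (#(restricted m (· ≤ a)) : R)
  | N, 0, m, _ => by
    rw [qBinom_zero_right, coeff_one, card_restricted_le_zero, eq_comm]
    split_ifs <;> simp
  | N + 1, a + 1, m, h => by
    rw [qBinom_succ_succ, coeff_add, mul_comm, coeff_mul_X_pow', coeff_qBinom (by omega),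
      card_restricted_le_succ, Nat.cast_add]
    split_ifs
    · rw [coeff_qBinom (by omega)]
    · rw [Nat.cast_zero]

end GaussianBinomial

section LargestPart

variable {R : Type*} [CommRing R] (c : R)

theorem pow_sub_mul_sub_one_pow_eq_sum_powerset {ι : Type*} [DecidableEq ι] {V U : Finset ι}
    (hVU : V ⊆ U) :
    c ^ (#U - #V) * (c - 1) ^ #V =
      ∑ S ∈ U.powerset, if S ⊆ V then (-1) ^ #S * c ^ (#U - #S) else 0 := by
  have hV : {S ∈ U.powerset | S ⊆ V} = V.powerset := by
    ext S
    simp only [mem_filter, mem_powerset]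
    exact ⟨And.right, fun h => ⟨h.trans hVU, h⟩⟩
  rw [← sum_filter, hV, ← prod_const, prod_sub, mul_sum]
  refine sum_congr rfl fun S hS => ?_
  have hcardSV := card_le_card (mem_powerset.1 hS)
  have hcardVU := card_le_card hVU
  rw [prod_const, prod_const_one, card_sdiff_of_subset (mem_powerset.1 hS), mul_one,
    mul_left_comm, ← pow_add]
  congr 2
  omega

theorem lPart_mem {n : ℕ} (hn : 0 < n) (π : n.Partition) : lPart π ∈ π.parts := by
  have hne : π.parts.toFinset.Nonempty := by
    obtain ⟨i, hi⟩ := Multiset.exists_mem_of_ne_zero fun h0 : π.parts = 0 =>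
      hn.ne' (by simpa [h0] using π.parts_sum.symm)
    exact ⟨i, Multiset.mem_toFinset.2 hi⟩
  obtain ⟨i, hi, he⟩ := exists_mem_eq_sup _ hne id
  have : lPart π = π.parts.toFinset.sup id := by
    rw [lPart, sup_def, Multiset.toFinset_val, Multiset.map_id, Multiset.sup_dedup]
  rw [this, he]
  exact Multiset.mem_toFinset.1 hi

theorem le_lPart {n : ℕ} (π : n.Partition) {i : ℕ} (hi : i ∈ π.parts) : i ≤ lPart π :=
  Multiset.le_sup hi

theorem pow_lPart_sub_nud_mul_eq_sum_powerset {n : ℕ} (hn : 0 < n) (π : n.Partition)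
    {a : ℕ} (ha : lPart π = a + 1) :
    c ^ (lPart π - nud π) * (c - 1) ^ (nud π - 1) =
      ∑ S ∈ (Icc 1 a).powerset,
        if S ⊆ π.parts.toFinset then (-1) ^ #S * c ^ (a - #S) else 0 := by
  have hmem : a + 1 ∈ π.parts.toFinset := Multiset.mem_toFinset.2 (ha ▸ lPart_mem hn π)
  have hV : π.parts.toFinset.erase (a + 1) ⊆ Icc 1 a := by
    intro i hi
    obtain ⟨hi_ne, hi⟩ := mem_erase.1 hi
    rw [Multiset.mem_toFinset] at hi
    have := le_lPart π hi
    exact mem_Icc.2 ⟨π.parts_pos hi, by omega⟩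
  have hcard : #(π.parts.toFinset.erase (a + 1)) = nud π - 1 := card_erase_of_mem hmem
  have hnud : 1 ≤ nud π := card_pos.2 ⟨_, hmem⟩
  have h := pow_sub_mul_sub_one_pow_eq_sum_powerset c hV
  rw [Nat.card_Icc, Nat.add_sub_cancel, hcard] at h
  rw [ha, show a + 1 - nud π = a - (nud π - 1) by omega, h]
  refine sum_congr rfl fun S hS => if_congr ?_ rfl rfl
  have : a + 1 ∉ S := fun h => by simpa using mem_Icc.1 (mem_powerset.1 hS h)
  rw [subset_erase]
  exact and_iff_left this

theorem card_filter_lPart_eq_and_subset {n : ℕ} (hn : 0 < n) {a : ℕ} {S : Finset ℕ}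
    (hS : S ⊆ Icc 1 a) :
    #{π : n.Partition | lPart π = a + 1 ∧ S ⊆ π.parts.toFinset} =
      if a + 1 + ∑ i ∈ S, i ≤ n then
        #(restricted (n - (a + 1 + ∑ i ∈ S, i)) (· ≤ a + 1))
      else 0 := by
  have hS' : ∀ i ∈ S, 0 < i ∧ i ≤ a := fun i hi => mem_Icc.1 (hS hi)
  have ht : ∀ i ∈ (a + 1) ::ₘ S.val, 0 < i ∧ i ≤ a + 1 := by
    intro i hi
    rcases Multiset.mem_cons.1 hi with rfl | hi
    · omega
    · have := hS' i hi
      omega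
  have hnd : ((a + 1) ::ₘ S.val).Nodup :=
    Multiset.nodup_cons.2 ⟨fun h => by have := hS' _ h; omega, S.nodup⟩
  have hsum : ((a + 1) ::ₘ S.val).sum = a + 1 + ∑ i ∈ S, i := by
    rw [Multiset.sum_cons, sum_val]
    rfl
  rw [← hsum, ← card_filter_le_parts ht, restricted, filter_filter]
  congr 1
  refine filter_congr fun π _ => ?_
  rw [Multiset.le_iff_subset hnd, Multiset.cons_subset]
  constructor
  · rintro ⟨hl, hsub⟩
    exact ⟨fun i hi => hl ▸ le_lPart π hi, hl ▸ lPart_mem hn π,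
      fun i hi => Multiset.mem_toFinset.1 (hsub hi)⟩
  · rintro ⟨hle, hmem, hsub⟩
    exact ⟨le_antisymm (Multiset.sup_le.2 hle) (le_lPart π hmem),
      fun i hi => Multiset.mem_toFinset.2 (hsub hi)⟩

end LargestPart

section Recurrence

variable {R : Type*} [CommRing R] (c : R)

noncomputable def prodCSubXPow (a : ℕ) : R[X] :=
  ∏ b ∈ Icc 1 a, (C c - X ^ b)

noncomputable def largestPartPoly (N : ℕ) : R[X] :=
  ∑ a ∈ range N, X ^ (a + 1) * qBinom R N (a + 1) * prodCSubXPow c a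

/-- Vanishes at `F = ∅`, because `sInf ∅ = 0`. -/
noncomputable def signedGeomSum (F : Finset ℕ) : R :=
  (-1) ^ (#F - 1) * ∑ j ∈ range (sInf (F : Set ℕ)), c ^ j

noncomputable def distinctPartsPoly (N : ℕ) : R[X] :=
  ∑ F ∈ (Icc 1 N).powerset, C (signedGeomSum c F) * X ^ (∑ i ∈ F, i)

theorem prodCSubXPow_zero : prodCSubXPow c 0 = 1 := by
  simp [prodCSubXPow]

theorem prodCSubXPow_succ (a : ℕ) :
    prodCSubXPow c (a + 1) = prodCSubXPow c a * (C c - X ^ (a + 1)) :=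
  prod_Icc_succ_top (by omega) _

theorem signedGeomSum_empty : signedGeomSum c ∅ = 0 := by
  simp [signedGeomSum]

theorem signedGeomSum_singleton (m : ℕ) : signedGeomSum c {m} = ∑ j ∈ range m, c ^ j := by
  simp [signedGeomSum]

theorem signedGeomSum_insert {F : Finset ℕ} {m : ℕ} (hF : F.Nonempty)
    (hm : ∀ i ∈ F, i < m) :
    signedGeomSum c (insert m F) = -signedGeomSum c F := by
  have hmin : sInf (insert m (F : Set ℕ)) = sInf (F : Set ℕ) := by
    rw [csInf_insert (OrderBot.bddBelow _) (coe_nonempty.2 hF), inf_eq_right]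
    exact (hm _ (Nat.sInf_mem (coe_nonempty.2 hF))).le
  obtain ⟨k, hk⟩ := Nat.exists_eq_add_of_lt (card_pos.2 hF)
  rw [signedGeomSum, signedGeomSum, coe_insert, hmin,
    card_insert_of_notMem fun h => (hm m h).false, hk]
  simp [pow_succ]

theorem sum_qBinom_mul_prodCSubXPow_add_largestPartPoly (N : ℕ) :
    ∑ a ∈ range (N + 1), qBinom R N a * prodCSubXPow c a + largestPartPoly c N =
      1 + C c * ∑ a ∈ range N, qBinom R N (a + 1) * prodCSubXPow c a := by
  rw [sum_range_succ', qBinom_zero_right, prodCSubXPow_zero, largestPartPoly, mul_sum,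
    add_right_comm, ← sum_add_distrib, one_mul, add_comm]
  congr 1
  refine sum_congr rfl fun a _ => ?_
  rw [prodCSubXPow_succ]
  ring

theorem sum_qBinom_succ_mul_prodCSubXPow (N : ℕ) :
    ∑ a ∈ range N, qBinom R N (a + 1) * prodCSubXPow c a = C (∑ j ∈ range N, c ^ j) := by
  induction N with
  | zero => simp
  | succ N ih =>
    have split : ∑ a ∈ range (N + 1), qBinom R (N + 1) (a + 1) * prodCSubXPow c a =
        ∑ a ∈ range (N + 1), qBinom R N a * prodCSubXPow c a + largestPartPoly c N := by
      simp only [qBinom_succ_succ, add_mul, sum_add_distrib, largestPartPoly]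
      rw [sum_range_succ (fun a => X ^ (a + 1) * qBinom R N (a + 1) * prodCSubXPow c a) N,
        qBinom_eq_zero_of_lt (by omega : N < N + 1), mul_zero, zero_mul, add_zero]
    rw [split, sum_qBinom_mul_prodCSubXPow_add_largestPartPoly, ih, geom_sum_succ, map_add,
      map_mul, map_one, add_comm]

theorem largestPartPoly_succ (N : ℕ) :
    largestPartPoly c (N + 1) = (1 - X ^ (N + 1)) * largestPartPoly c N +
      X ^ (N + 1) * C (∑ j ∈ range (N + 1), c ^ j) := by
  have pascal : ∀ a ∈ range (N + 1),
      X ^ (a + 1) * qBinom R (N + 1) (a + 1) * prodCSubXPow c a =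
        X ^ (N + 1) * (qBinom R N a * prodCSubXPow c a) +
          X ^ (a + 1) * qBinom R N (a + 1) * prodCSubXPow c a := by
    intro a ha
    have ha : a ≤ N := Nat.le_of_lt_succ (mem_range.1 ha)
    have hpow : (X : R[X]) ^ (N + 1) = X ^ (a + 1) * X ^ (N - a) := by
      rw [← pow_add]
      congr 1
      omega
    rw [qBinom_succ_succ' ha, hpow]
    ring
  have split : largestPartPoly c (N + 1) =
      X ^ (N + 1) * ∑ a ∈ range (N + 1), qBinom R N a * prodCSubXPow c a +
        largestPartPoly c N := by
    rw [largestPartPoly, sum_congr rfl pascal, sum_add_distrib, ← mul_sum,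
      sum_range_succ (fun a => X ^ (a + 1) * qBinom R N (a + 1) * prodCSubXPow c a) N,
      qBinom_eq_zero_of_lt (by omega : N < N + 1), mul_zero, zero_mul, add_zero, largestPartPoly]
  have key := sum_qBinom_mul_prodCSubXPow_add_largestPartPoly c N
  rw [sum_qBinom_succ_mul_prodCSubXPow, ← map_mul] at key
  rw [split, geom_sum_succ, map_add, map_one]
  linear_combination X ^ (N + 1) * key

theorem distinctPartsPoly_succ (N : ℕ) :
    distinctPartsPoly c (N + 1) = (1 - X ^ (N + 1)) * distinctPartsPoly c N +
      X ^ (N + 1) * C (∑ j ∈ range (N + 1), c ^ j) := by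
  have hN : N + 1 ∉ Icc 1 N := by simp
  have insert_term : ∀ F ∈ (Icc 1 N).powerset,
      C (signedGeomSum c (insert (N + 1) F)) * X ^ (∑ i ∈ insert (N + 1) F, i) =
        -X ^ (N + 1) * (C (signedGeomSum c F) * X ^ (∑ i ∈ F, i)) +
          if F = ∅ then X ^ (N + 1) * C (∑ j ∈ range (N + 1), c ^ j) else 0 := by
    intro F hF
    rw [sum_insert fun h => hN (mem_powerset.1 hF h), pow_add]
    split_ifs with h
    · simp [h, signedGeomSum_empty, signedGeomSum_singleton, mul_comm]
    · have hlt : ∀ i ∈ F, i < N + 1 := fun i hi =>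
        Nat.lt_succ_of_le (mem_Icc.1 (mem_powerset.1 hF hi)).2
      rw [signedGeomSum_insert c (nonempty_iff_ne_empty.2 h) hlt, map_neg]
      ring
  rw [distinctPartsPoly, ← insert_Icc_right_eq_Icc_add_one (by omega), sum_powerset_insert hN,
    sum_congr rfl insert_term, sum_add_distrib, sum_ite_eq' _ (∅ : Finset ℕ),
    if_pos (empty_mem_powerset _), ← mul_sum, ← distinctPartsPoly]
  ring

theorem distinctPartsPoly_eq_largestPartPoly (N : ℕ) :
    distinctPartsPoly c N = largestPartPoly c N := by
  induction N with
  | zero => simp [distinctPartsPoly, largestPartPoly, signedGeomSum_empty]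
  | succ N ih => rw [distinctPartsPoly_succ, largestPartPoly_succ, ih]

end Recurrence

section Coefficients

variable {R : Type*} [CommRing R] (c : R)

theorem coeff_distinctPartsPoly (N m : ℕ) :
    (distinctPartsPoly c N).coeff m =
      ∑ F ∈ (Icc 1 N).powerset with ∑ i ∈ F, i = m, signedGeomSum c F := by
  rw [distinctPartsPoly, finsetSum_coeff, sum_filter]
  refine sum_congr rfl fun F _ => ?_
  rw [coeff_C_mul_X_pow]
  exact if_congr eq_comm rfl rfl

theorem prodCSubXPow_eq_sum (a : ℕ) :
    prodCSubXPow c a =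
      ∑ S ∈ (Icc 1 a).powerset, C ((-1) ^ #S * c ^ (a - #S)) * X ^ (∑ i ∈ S, i) := by
  rw [prodCSubXPow, prod_sub]
  refine sum_congr rfl fun S hS => ?_
  rw [prod_const, prod_pow_eq_pow_sum, card_sdiff_of_subset (mem_powerset.1 hS), Nat.card_Icc,
    Nat.add_sub_cancel, map_mul, map_pow, map_pow, map_neg, map_one]

theorem coeff_largestPartPoly (n : ℕ) :
    (largestPartPoly c n).coeff n =
      ∑ a ∈ range n, ∑ S ∈ (Icc 1 a).powerset, (-1) ^ #S * c ^ (a - #S) *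
        ((if a + 1 + ∑ i ∈ S, i ≤ n then
          #(restricted (n - (a + 1 + ∑ i ∈ S, i)) (· ≤ a + 1)) else 0 : ℕ) : R) := by
  rw [largestPartPoly, finsetSum_coeff]
  refine sum_congr rfl fun a _ => ?_
  rw [prodCSubXPow_eq_sum, mul_sum, finsetSum_coeff]
  refine sum_congr rfl fun S _ => ?_
  rw [show X ^ (a + 1) * qBinom R n (a + 1) * (C ((-1) ^ #S * c ^ (a - #S)) * X ^ ∑ i ∈ S, i) =
      C ((-1) ^ #S * c ^ (a - #S)) * qBinom R n (a + 1) * X ^ (a + 1 + ∑ i ∈ S, i) by ring,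
    coeff_mul_X_pow', coeff_C_mul]
  split_ifs with h
  · rw [coeff_qBinom (by omega)]
  · rw [Nat.cast_zero, mul_zero]

theorem sum_distincts_eq_coeff_distinctPartsPoly (n : ℕ) :
    ∑ π ∈ distincts n, (-1) ^ (Multiset.card π.parts - 1) * ∑ j ∈ range (sPart π), c ^ j
      =
      (distinctPartsPoly c n).coeff n := by
  rw [coeff_distinctPartsPoly, ← sum_distincts_eq_sum_powerset]
  refine sum_congr rfl fun π hπ => ?_
  have hset : {i | i ∈ π.parts} = (π.parts.toFinset : Set ℕ) := by
    ext
    simp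
  rw [signedGeomSum, Multiset.toFinset_card_of_nodup (mem_filter.1 hπ).2, sPart, hset]

theorem sum_partitions_eq_coeff_largestPartPoly {n : ℕ} (hn : 0 < n) :
    ∑ π : n.Partition, c ^ (lPart π - nud π) * (c - 1) ^ (nud π - 1) =
      (largestPartPoly c n).coeff n := by
  have hl : ∀ π : n.Partition, 1 ≤ lPart π ∧ lPart π ≤ n := fun π =>
    ⟨π.parts_pos (lPart_mem hn π), le_of_mem_parts (lPart_mem hn π)⟩
  rw [coeff_largestPartPoly, ← sum_fiberwise_of_maps_to (g := fun π => lPart π - 1)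
    (t := range n) fun π _ => mem_range.2 (by have := hl π; omega)]
  refine sum_congr rfl fun a _ => ?_
  have fiber : ∀ π : n.Partition, lPart π - 1 = a ↔ lPart π = a + 1 := fun π => by
    have := hl π
    omega
  calc _ = ∑ π ∈ univ with lPart π - 1 = a, ∑ S ∈ (Icc 1 a).powerset,
          if S ⊆ π.parts.toFinset then (-1) ^ #S * c ^ (a - #S) else 0 :=
        sum_congr rfl fun π hπ =>
          pow_lPart_sub_nud_mul_eq_sum_powerset c hn π ((fiber π).1 (mem_filter.1 hπ).2)
    _ = ∑ S ∈ (Icc 1 a).powerset, (-1) ^ #S * c ^ (a - #S) *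
          (#{π : n.Partition | lPart π = a + 1 ∧ S ⊆ π.parts.toFinset} : R) := by
        rw [sum_comm]
        refine sum_congr rfl fun S _ => ?_
        rw [← sum_filter, sum_const, filter_filter, nsmul_eq_mul, mul_comm]
        simp only [fiber]
    _ = _ := sum_congr rfl fun S hS => by
        rw [card_filter_lPart_eq_and_subset hn (mem_powerset.1 hS)]

end Coefficients

/-- Corollary 2.4 (partition version) as an identity in ℤ[c]:
∑_{π ∈ D(n)} (−1)^{#(π)−1} ∑_{j=0}^{s(π)−1} c^j
  = ∑_{π ∈ P(n)} c^{l(π)−ν_d(π)} (c−1)^{ν_d(π)−1}. -/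
theorem stmt5 (n : ℕ) (hn : 0 < n) :
    ∑ π ∈ Nat.Partition.distincts n,
        (-1 : Polynomial ℤ) ^ (Multiset.card π.parts - 1) *
          ∑ j ∈ Finset.range (sPart π), X ^ j =
      ∑ π : n.Partition, X ^ (lPart π - nud π) * (X - 1) ^ (nud π - 1) := by
  rw [sum_distincts_eq_coeff_distinctPartsPoly, distinctPartsPoly_eq_largestPartPoly,
    sum_partitions_eq_coeff_largestPartPoly _ hn]
end

section
/- Let q, z be complex numbers with |q| < 1 and |z| ≤ 1. Then ∑_{n=1}^{∞} (−1)^{n−1} z^n q^{n^2} / ((zq;q^2)_n (1 − z q^{2n})) = ∑_{n=1}^{∞} z^n q^{n(n+1)/2} (q;q)_{n−1} / (zq;q)_n. -/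
/-!
Write `L(w)` and `R(w)` for the two sides with `z` replaced by `w`, on the closed unit disc. Both
satisfy the same `q`-difference equation `S(w) = w q / ((1 - w q)(1 - w q²)) + c(w) S(w q²)` with
`c(w) = -w q / (1 - w q)`: for `L` by splitting off the first term and shifting the index, for `R`
because `R_n(w) - c(w) R_n(w q²)` telescopes. So `D = L - R` satisfies `D(w) = c(w) D(w q²)`, and
iterating along `w = z q^{2m}` writes `D(z)` as a bounded quantity times factors
`c(z q^{2m}) → 0`.
-/

open Finset

open Filter Topology

lemma qPoch_succ (a q : ℂ) (n : ℕ) : qPoch a q (n + 1) = qPoch a q n * (1 - a * q ^ n) :=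
  prod_range_succ _ _

lemma qPoch_succ' (a q : ℂ) (n : ℕ) : qPoch a q (n + 1) = (1 - a) * qPoch (a * q) q n := by
  rw [qPoch, prod_range_succ', mul_comm, pow_zero, mul_one]
  exact congrArg _ (prod_congr rfl fun k _ => by ring)

lemma qPoch_mul_sq (a q : ℂ) (n : ℕ) :
    qPoch (a * q) (q ^ 2) n = ∏ k ∈ range n, (1 - a * q ^ (2 * k + 1)) :=
  prod_congr rfl fun k _ => by ring

lemma qPoch_ne_zero_s19 {a q : ℂ} {n : ℕ} (h : ∀ k < n, a * q ^ k ≠ 1) :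
    qPoch a q n ≠ 0 :=
  prod_ne_zero_iff.2 fun k hk => sub_ne_zero.2 (h k (mem_range.1 hk)).symm

lemma one_sub_le_norm_qPoch {a q : ℂ} {r : ℝ} (hr : r ≤ 1) (ha : ‖a‖ ≤ r) (hq : ‖q‖ ≤ 1)
    (n : ℕ) : (1 - r) ^ n ≤ ‖qPoch a q n‖ := by
  rw [qPoch, norm_prod, pow_eq_prod_const _ n]
  refine prod_le_prod (fun _ _ => sub_nonneg.2 hr) fun k _ => ?_
  have : ‖a * q ^ k‖ ≤ r := by
    rw [norm_mul, norm_pow]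
    exact (mul_le_of_le_one_right (norm_nonneg a) (pow_le_one₀ (norm_nonneg q) hq)).trans ha
  linarith [norm_sub_norm_le (1 : ℂ) (a * q ^ k), norm_one (α := ℂ)]

lemma norm_qPoch_le {a q : ℂ} (ha : ‖a‖ ≤ 1) (hq : ‖q‖ ≤ 1) (n : ℕ) :
    ‖qPoch a q n‖ ≤ 2 ^ n := by
  rw [qPoch, norm_prod, pow_eq_prod_const _ n]
  refine prod_le_prod (fun _ _ => norm_nonneg _) fun k _ => ?_
  have : ‖a * q ^ k‖ ≤ 1 := by
    rw [norm_mul, norm_pow]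
    exact mul_le_one₀ ha (by positivity) (pow_le_one₀ (norm_nonneg q) hq)
  linarith [norm_sub_le (1 : ℂ) (a * q ^ k), norm_one (α := ℂ)]

lemma qPoch_add_two (a q : ℂ) (n : ℕ) :
    (1 - a) * (1 - a * q) * qPoch (a * q * q) q n
      = qPoch a q n * (1 - a * q ^ n) * (1 - a * q ^ (n + 1)) := by
  rw [mul_assoc, ← qPoch_succ', ← qPoch_succ', ← qPoch_succ, ← qPoch_succ]

lemma triangle_succ (n : ℕ) : (n + 2) * (n + 3) / 2 = (n + 1) * (n + 2) / 2 + (n + 2) := by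
  have : (n + 2) * (n + 3) = (n + 1) * (n + 2) + 2 * (n + 2) := by ring
  omega

noncomputable def lhsTerm (q w : ℂ) (n : ℕ) : ℂ :=
  (-1) ^ n * w ^ (n + 1) * q ^ ((n + 1) ^ 2) /
    (qPoch (w * q) (q ^ 2) (n + 1) * (1 - w * q ^ (2 * (n + 1))))

noncomputable def rhsTerm (q w : ℂ) (n : ℕ) : ℂ :=
  w ^ (n + 1) * q ^ ((n + 1) * (n + 2) / 2) * qPoch q q n / qPoch (w * q) q (n + 1)

noncomputable def telescopeTerm (q w : ℂ) (n : ℕ) : ℂ :=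
  rhsTerm q w n / (1 - w * q ^ (n + 2))

noncomputable def shiftCoeff (q w : ℂ) : ℂ := -(w * q) / (1 - w * q)

lemma lhsTerm_zero (q w : ℂ) : lhsTerm q w 0 = telescopeTerm q w 0 := by
  simp only [lhsTerm, telescopeTerm, rhsTerm, qPoch, zero_add, prod_range_one, prod_range_zero,
    div_eq_mul_inv, mul_inv]
  ring

lemma lhsTerm_succ (q w : ℂ) (n : ℕ) :
    lhsTerm q w (n + 1) = shiftCoeff q w * lhsTerm q (w * q ^ 2) n := by
  rw [lhsTerm, lhsTerm, shiftCoeff, qPoch_succ', show w * q * q ^ 2 = w * q ^ 2 * q by ring]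
  simp only [div_eq_mul_inv, mul_inv]
  ring

lemma rhsTerm_sub_shift {q w : ℂ} (hw : ∀ k, w * q ^ (k + 1) ≠ 1) (n : ℕ) :
    rhsTerm q w n - shiftCoeff q w * rhsTerm q (w * q ^ 2) n
      = telescopeTerm q w n - telescopeTerm q w (n + 1) := by
  have hne : ∀ k, 1 - w * q ^ (k + 1) ≠ 0 := fun k => sub_ne_zero.2 (hw k).symm
  have h0 : 1 - w * q ≠ 0 := by simpa using hne 0
  have h1 : 1 - w * q ^ 2 ≠ 0 := hne 1
  have h2 : 1 - w * q ^ (n + 2) ≠ 0 := hne (n + 1)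
  have h3 : 1 - w * q ^ (n + 3) ≠ 0 := hne (n + 2)
  have hQ : qPoch (w * q) q (n + 1) ≠ 0 :=
    qPoch_ne_zero_s19 fun k _ => by rw [mul_assoc, ← pow_succ']; exact hw k
  have hQ' : qPoch (w * q) q (n + 2) = qPoch (w * q) q (n + 1) * (1 - w * q ^ (n + 2)) := by
    rw [qPoch_succ]; ring
  have hR : qPoch (w * q ^ 2 * q) q (n + 1)
      = qPoch (w * q) q (n + 1) * (1 - w * q ^ (n + 2)) * (1 - w * q ^ (n + 3))
        / ((1 - w * q) * (1 - w * q ^ 2)) := by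
    rw [eq_div_iff (mul_ne_zero h0 h1), show w * q ^ 2 = w * q * q by ring, mul_comm,
      qPoch_add_two]
    ring
  rw [telescopeTerm, telescopeTerm, rhsTerm, rhsTerm, rhsTerm, shiftCoeff, hR, hQ',
    triangle_succ, pow_add q _ (n + 2), qPoch_succ q q n]
  field_simp
  ring

lemma norm_mul_pow_le_norm {w q : ℂ} (hw : ‖w‖ ≤ 1) (hq : ‖q‖ ≤ 1) {k : ℕ} (hk : k ≠ 0) :
    ‖w * q ^ k‖ ≤ ‖q‖ := by
  rw [norm_mul, norm_pow]
  calc ‖w‖ * ‖q‖ ^ k ≤ 1 * ‖q‖ ^ 1 :=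
        mul_le_mul hw (pow_le_pow_of_le_one (norm_nonneg q) hq (Nat.one_le_iff_ne_zero.2 hk))
          (by positivity) zero_le_one
    _ = ‖q‖ := by rw [one_mul, pow_one]

lemma mul_pow_succ_ne_one {w q : ℂ} (hw : ‖w‖ ≤ 1) (hq : ‖q‖ < 1) (k : ℕ) :
    w * q ^ (k + 1) ≠ 1 := fun h => by
  simpa [h] using (norm_mul_pow_le_norm hw hq.le k.succ_ne_zero).trans_lt hq

noncomputable def envelope (c : ℝ) (n : ℕ) : ℝ :=
  c ^ ((n + 1) * (n + 2) / 2) * 2 ^ (n + 2) / (1 - c) ^ (n + 2)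

lemma norm_lhsTerm_le {q w : ℂ} (hq : ‖q‖ < 1) (hw : ‖w‖ ≤ 1) (n : ℕ) :
    ‖lhsTerm q w n‖ ≤ envelope ‖q‖ n := by
  have hnum : ‖(-1) ^ n * w ^ (n + 1) * q ^ ((n + 1) ^ 2)‖
      ≤ ‖q‖ ^ ((n + 1) * (n + 2) / 2) * 2 ^ (n + 2) := by
    rw [norm_mul, norm_mul, norm_pow, norm_pow, norm_pow, norm_neg, norm_one, one_pow, one_mul]
    have hexp : (n + 1) * (n + 2) / 2 ≤ (n + 1) ^ 2 := by
      apply Nat.div_le_of_le_mul; nlinarith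
    calc ‖w‖ ^ (n + 1) * ‖q‖ ^ (n + 1) ^ 2 ≤ ‖q‖ ^ (n + 1) ^ 2 :=
          mul_le_of_le_one_left (by positivity) (pow_le_one₀ (norm_nonneg w) hw)
      _ ≤ ‖q‖ ^ ((n + 1) * (n + 2) / 2) := pow_le_pow_of_le_one (norm_nonneg q) hq.le hexp
      _ ≤ _ := le_mul_of_one_le_right (by positivity) (one_le_pow₀ one_le_two)
  have hden : (1 - ‖q‖) ^ (n + 2)
      ≤ ‖qPoch (w * q) (q ^ 2) (n + 1) * (1 - w * q ^ (2 * (n + 1)))‖ := by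
    rw [norm_mul, pow_succ]
    refine mul_le_mul (one_sub_le_norm_qPoch hq.le ?_ ?_ _) ?_ (by linarith) (norm_nonneg _)
    · simpa using norm_mul_pow_le_norm hw hq.le one_ne_zero
    · rw [norm_pow]; exact pow_le_one₀ (norm_nonneg q) hq.le
    · linarith [norm_sub_norm_le (1 : ℂ) (w * q ^ (2 * (n + 1))), norm_one (α := ℂ),
        norm_mul_pow_le_norm hw hq.le (k := 2 * (n + 1)) (by omega)]
  rw [lhsTerm, norm_div]
  exact div_le_div₀ (by positivity) hnum (pow_pos (by linarith) _) hden

lemma norm_rhsTerm_le {q w : ℂ} (hq : ‖q‖ < 1) (hw : ‖w‖ ≤ 1) (n : ℕ) :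
    ‖rhsTerm q w n‖ ≤ envelope ‖q‖ n := by
  have hnum : ‖w ^ (n + 1) * q ^ ((n + 1) * (n + 2) / 2) * qPoch q q n‖
      ≤ ‖q‖ ^ ((n + 1) * (n + 2) / 2) * 2 ^ (n + 2) := by
    rw [norm_mul, norm_mul, norm_pow, norm_pow]
    exact mul_le_mul (mul_le_of_le_one_left (by positivity) (pow_le_one₀ (norm_nonneg w) hw))
      ((norm_qPoch_le hq.le hq.le n).trans (pow_le_pow_right₀ one_le_two (by omega)))
      (norm_nonneg _) (by positivity)
  have hden : (1 - ‖q‖) ^ (n + 2) ≤ ‖qPoch (w * q) q (n + 1)‖ :=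
    (pow_le_pow_of_le_one (by linarith) (by linarith [norm_nonneg q]) (by omega)).trans
      (one_sub_le_norm_qPoch hq.le (by simpa using norm_mul_pow_le_norm hw hq.le one_ne_zero)
        hq.le _)
  rw [rhsTerm, norm_div]
  exact div_le_div₀ (by positivity) hnum (pow_pos (by linarith) _) hden

lemma summable_of_le_mul_of_tendsto_zero {a r : ℕ → ℝ} (ha : ∀ n, 0 ≤ a n)
    (hr : Tendsto r atTop (𝓝 0)) (h : ∀ n, a (n + 1) ≤ r n * a n) : Summable a := by
  refine summable_of_ratio_norm_eventually_le (r := 1 / 2) (by norm_num) ?_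
  filter_upwards [hr.eventually (ge_mem_nhds (by norm_num : (0 : ℝ) < 1 / 2))] with n hn
  rw [Real.norm_of_nonneg (ha _), Real.norm_of_nonneg (ha _)]
  exact (h n).trans (mul_le_mul_of_nonneg_right hn (ha n))

lemma summable_envelope {c : ℝ} (h0 : 0 ≤ c) (h1 : c < 1) : Summable (envelope c) := by
  have hc : 1 - c ≠ 0 := by linarith
  refine summable_of_le_mul_of_tendsto_zero (r := fun n => 2 * c ^ 2 / (1 - c) * c ^ n)
    (fun n => by unfold envelope; have := sub_pos.2 h1; positivity)
    (by simpa using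
      (tendsto_pow_atTop_nhds_zero_of_lt_one h0 h1).const_mul (2 * c ^ 2 / (1 - c)))
    fun n => le_of_eq ?_
  rw [envelope, envelope, triangle_succ]
  field_simp
  ring

lemma summable_lhsTerm {q w : ℂ} (hq : ‖q‖ < 1) (hw : ‖w‖ ≤ 1) : Summable (lhsTerm q w) :=
  .of_norm_bounded (summable_envelope (norm_nonneg q) hq) (norm_lhsTerm_le hq hw)

lemma summable_rhsTerm {q w : ℂ} (hq : ‖q‖ < 1) (hw : ‖w‖ ≤ 1) : Summable (rhsTerm q w) :=
  .of_norm_bounded (summable_envelope (norm_nonneg q) hq) (norm_rhsTerm_le hq hw)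

lemma hasSum_of_eq_sub_succ_s19 {E : Type*} [NormedAddCommGroup E] {f v : ℕ → E}
    (hf : Summable f) (hv : Tendsto v atTop (𝓝 0)) (h : ∀ n, f n = v n - v (n + 1)) :
    HasSum f (v 0) := by
  refine hf.hasSum_iff_tendsto_nat.2 ?_
  simp_rw [h, sum_range_sub']
  simpa using tendsto_const_nhds.sub hv

lemma tsum_lhsTerm_eq {q w : ℂ} (hq : ‖q‖ < 1) (hw : ‖w‖ ≤ 1) :
    ∑' n, lhsTerm q w n
      = telescopeTerm q w 0 + shiftCoeff q w * ∑' n, lhsTerm q (w * q ^ 2) n := by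
  rw [(summable_lhsTerm hq hw).tsum_eq_zero_add, lhsTerm_zero, ← tsum_mul_left]
  simp_rw [lhsTerm_succ]

lemma tsum_rhsTerm_eq {q w : ℂ} (hq : ‖q‖ < 1) (hw : ‖w‖ ≤ 1) :
    ∑' n, rhsTerm q w n
      = telescopeTerm q w 0 + shiftCoeff q w * ∑' n, rhsTerm q (w * q ^ 2) n := by
  have hs := summable_rhsTerm hq hw
  have hs₂ := (summable_rhsTerm hq
    ((norm_mul_pow_le_norm hw hq.le two_ne_zero).trans hq.le)).mul_left (shiftCoeff q w)
  have hv : Tendsto (telescopeTerm q w) atTop (𝓝 (0 / (1 - w * 0))) :=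
    hs.tendsto_atTop_zero.div (tendsto_const_nhds.sub <| .const_mul w <|
      (tendsto_pow_atTop_nhds_zero_of_norm_lt_one hq).comp (tendsto_add_atTop_nat 2)) (by simp)
  rw [mul_zero, sub_zero, zero_div] at hv
  have htel := hasSum_of_eq_sub_succ_s19 (hs.sub hs₂) hv
    (rhsTerm_sub_shift (mul_pow_succ_ne_one hw hq))
  rw [← htel.tsum_eq, hs.tsum_sub hs₂, tsum_mul_left]
  ring

lemma eq_zero_of_eq_mul_succ {𝕜 : Type*} [NormedCommRing 𝕜] {x c : ℕ → 𝕜} {M : ℝ}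
    (hx : ∀ m, ‖x m‖ ≤ M) (hc : Tendsto c atTop (𝓝 0)) (hrec : ∀ m, x m = c m * x (m + 1)) :
    x 0 = 0 := by
  obtain ⟨N, hN⟩ := eventually_atTop.1 <|
    (tendsto_zero_iff_norm_tendsto_zero.1 hc).eventually
      (ge_mem_nhds (by norm_num : (0 : ℝ) < 1 / 2))
  have hdecay : ∀ k, ∀ m ≥ N, ‖x m‖ ≤ (1 / 2) ^ k * M := by
    intro k
    induction k with
    | zero => simpa using fun m _ => hx m
    | succ k ih =>
      intro m hm
      calc ‖x m‖ ≤ ‖c m‖ * ‖x (m + 1)‖ := by rw [hrec m]; exact norm_mul_le _ _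
        _ ≤ 1 / 2 * ((1 / 2) ^ k * M) :=
            mul_le_mul (by simpa using hN m hm) (ih _ (by omega)) (norm_nonneg _) (by norm_num)
        _ = (1 / 2) ^ (k + 1) * M := by ring
  have hxN : x N = 0 := norm_le_zero_iff.1 <| ge_of_tendsto'
    (by simpa using (tendsto_pow_atTop_nhds_zero_of_lt_one (by norm_num : (0 : ℝ) ≤ 1 / 2)
      (by norm_num)).mul_const M) fun k => hdecay k N le_rfl
  have hprod : ∀ m, x 0 = (∏ i ∈ range m, c i) * x m := by
    intro m
    induction m with
    | zero => simp
    | succ m ih => rw [ih, hrec m, prod_range_succ, mul_assoc]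
  rw [hprod N, hxN, mul_zero]

lemma tendsto_shiftCoeff_zero (q : ℂ) : Tendsto (shiftCoeff q) (𝓝 0) (𝓝 0) := by
  have h : ContinuousAt (shiftCoeff q) 0 := by
    unfold shiftCoeff
    fun_prop (disch := simp)
  simpa [shiftCoeff] using h.tendsto

theorem tsum_lhsTerm_eq_tsum_rhsTerm {q z : ℂ} (hq : ‖q‖ < 1) (hz : ‖z‖ ≤ 1) :
    ∑' n, lhsTerm q z n = ∑' n, rhsTerm q z n := by
  set D : ℂ → ℂ := fun w => ∑' n, lhsTerm q w n - ∑' n, rhsTerm q w n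
  have hw : ∀ m : ℕ, ‖z * q ^ (2 * m)‖ ≤ 1 := fun m => by
    rw [norm_mul, norm_pow]
    exact mul_le_one₀ hz (by positivity) (pow_le_one₀ (norm_nonneg q) hq.le)
  have hbound : ∀ m, ‖D (z * q ^ (2 * m))‖ ≤ 2 * ∑' n, envelope ‖q‖ n := fun m => by
    have hS := (summable_envelope (norm_nonneg q) hq).hasSum
    linarith [norm_sub_le (∑' n, lhsTerm q (z * q ^ (2 * m)) n)
        (∑' n, rhsTerm q (z * q ^ (2 * m)) n),
      tsum_of_norm_bounded hS (norm_lhsTerm_le hq (hw m)),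
      tsum_of_norm_bounded hS (norm_rhsTerm_le hq (hw m))]
  have hrec : ∀ m, D (z * q ^ (2 * m))
      = shiftCoeff q (z * q ^ (2 * m)) * D (z * q ^ (2 * (m + 1))) := fun m => by
    rw [show z * q ^ (2 * (m + 1)) = z * q ^ (2 * m) * q ^ 2 by ring]
    simp only [D, tsum_lhsTerm_eq hq (hw m), tsum_rhsTerm_eq hq (hw m)]
    ring
  have hq2 : ‖q ^ 2‖ < 1 := by rw [norm_pow]; exact pow_lt_one₀ (norm_nonneg q) hq two_ne_zero
  have hc : Tendsto (fun m => shiftCoeff q (z * q ^ (2 * m))) atTop (𝓝 0) :=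
    (tendsto_shiftCoeff_zero q).comp <| by
      simpa [pow_mul] using (tendsto_pow_atTop_nhds_zero_of_norm_lt_one hq2).const_mul z
  simpa [D, sub_eq_zero] using eq_zero_of_eq_mul_succ hbound hc hrec

/-- Garvan's identity (equation (2.9)): for |q| < 1, |z| ≤ 1,
∑_{n≥1} (−1)^{n−1} z^n q^{n²}/((zq;q²)_n (1 − z q^{2n}))
  = ∑_{n≥1} z^n q^{n(n+1)/2} (q;q)_{n−1}/(zq;q)_n,
where (zq;q²)_n = ∏_{k=0}^{n-1}(1 − z q^{2k+1}). -/
theorem stmt19 (q z : ℂ) (hq : ‖q‖ < 1) (hz : ‖z‖ ≤ 1) :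
    ∑' n : ℕ, (-1) ^ n * z ^ (n + 1) * q ^ ((n + 1) ^ 2) /
        ((∏ k ∈ Finset.range (n + 1), (1 - z * q ^ (2 * k + 1))) *
          (1 - z * q ^ (2 * (n + 1)))) =
      ∑' n : ℕ, z ^ (n + 1) * q ^ ((n + 1) * (n + 2) / 2) * qPoch q q n /
        qPoch (z * q) q (n + 1) := by
  simpa only [lhsTerm, rhsTerm, qPoch_mul_sq] using tsum_lhsTerm_eq_tsum_rhsTerm hq hz
end
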